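/- Let k be a number field and p a prime number not dividing the class number of k. Then the sequence 0 → O_k^×/(O_k^×)^p → k^×/(k^×)^p → ⊕_v ℤ/pℤ → 0 is exact, where the first map is induced by the inclusion O_k^× ⊆ k^×, the second map sends the class of a to the family (v(a) mod p)_v indexed by the nonzero primes v of O_k, the first map is injective, the image of the first map equals the kernel of the second, and the second map is surjective. -/

import Mathlib

open NumberField IsDedekindDomain

/-- The subgroup of `p`-th powers in a commutative group `G`. -/
def pPowers (G : Type*) [CommGroup G] (p : ℕ) : Subgroup G :=
  (powMonoidHom p : G →* G).range

/-- The map `k^× → (k_v)^×` into the units of the `v`-adic completion. -/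
noncomputable def localUnitsMap (k : Type*) [Field k] [NumberField k]
    (v : HeightOneSpectrum (𝓞 k)) : kˣ →* (v.adicCompletion k)ˣ :=
  Units.map (algebraMap k (v.adicCompletion k)).toMonoidHom

/-- The `v`-adic valuation of a nonzero element of `k`, as an element of
`Multiplicative ℤ` (a uniformizer is sent to `ofAdd (-1)`). -/
noncomputable def mulValHom (k : Type*) [Field k] [NumberField k]
    (v : HeightOneSpectrum (𝓞 k)) : kˣ →* Multiplicative ℤ :=
  (WithZero.unitsWithZeroEquiv.toMonoidHom).comp
    (Units.map ((v.valuation (K := k)).toMonoidWithZeroHom.toMonoidHom))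

/-- The normalized additive `v`-adic valuation `v(a) ∈ ℤ` of `a ∈ k^×`
(a uniformizer has valuation `1`). -/
noncomputable def addVal (k : Type*) [Field k] [NumberField k]
    (v : HeightOneSpectrum (𝓞 k)) (a : kˣ) : ℤ :=
  - Multiplicative.toAdd (mulValHom k v a)

/-- The additive `v`-adic valuation modulo `p`, as a group homomorphism. -/
noncomputable def valModP (k : Type*) [Field k] [NumberField k] (p : ℕ)
    (v : HeightOneSpectrum (𝓞 k)) : kˣ →* Multiplicative (ZMod p) :=
  (AddMonoidHom.toMultiplicative (Int.castAddHom (ZMod p))).comp (mulValHom k v)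

/-- The subgroup of those `a ∈ k^×` which are `p`-th powers in the completion `k_v`. -/
noncomputable def locallyPthPower (k : Type*) [Field k] [NumberField k] (p : ℕ)
    (v : HeightOneSpectrum (𝓞 k)) : Subgroup kˣ :=
  Subgroup.comap (localUnitsMap k v) (pPowers (v.adicCompletion k)ˣ p)

/-- The subgroup of those `a ∈ k^×` which are `p`-th powers in `k_v` for all `v ∈ S` and
whose `v`-adic valuation is divisible by `p` for every nonzero prime `v ∉ S`. -/
noncomputable def VSpre (k : Type*) [Field k] [NumberField k] (p : ℕ)
    (S : Set (HeightOneSpectrum (𝓞 k))) : Subgroup kˣ :=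
  (⨅ v ∈ S, locallyPthPower k p v) ⊓ (⨅ v ∈ Sᶜ, (valModP k p v).ker)

/-- The Kummer group `V_S(k)`, the subgroup of `k^×/(k^×)^p` consisting of the classes of
those `a ∈ k^×` which are `p`-th powers in `k_v` for every `v ∈ S` and whose `v`-adic
valuation is divisible by `p` for every nonzero prime `v ∉ S`. -/
noncomputable def VS (k : Type*) [Field k] [NumberField k] (p : ℕ)
    (S : Set (HeightOneSpectrum (𝓞 k))) : Subgroup (kˣ ⧸ pPowers kˣ p) :=
  (VSpre k p S).map (QuotientGroup.mk' (pPowers kˣ p))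

open scoped DirectSum

/-!
The valuation vector `(v(a))_v` of `a ∈ k^×` is the divisor of the principal fractional ideal
`(a)`, and the divisor map from invertible fractional ideals to `⊕_v ℤ` is an isomorphism.
If every `v(a)` is divisible by `p`, then `(a) = J^p`, so the class of `J` is killed both by `p`
and by the class number `h`; hence `J = (b)` and `a = u b^p` for a unit `u`. Conversely every
divisor `D` has `h D` principal, and as `h` is invertible modulo `p` this makes the valuation map
onto `⊕_v ℤ/pℤ`. Injectivity on units holds because `𝓞 k` is integrally closed: a unit that is a
`p`-th power in `k` is the `p`-th power of a unit.
-/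

open FractionalIdeal
open scoped nonZeroDivisors

theorem pow_mem_pPowers {G : Type*} [CommGroup G] {n : ℕ} (b : G) : b ^ n ∈ pPowers G n :=
  ⟨b, rfl⟩

namespace Finsupp

variable {ι : Type*} {n : ℕ}

variable (n) in
noncomputable def reduceMod : (ι →₀ ℤ) →+ ⨁ _ : ι, ZMod n where
  toFun x := (x.mapRange (↑) Int.cast_zero).toDFinsupp
  map_zero' := DFinsupp.ext fun _ => Int.cast_zero
  map_add' _ _ := DFinsupp.ext fun _ => Int.cast_add _ _

@[simp]
theorem reduceMod_apply (x : ι →₀ ℤ) (i : ι) : reduceMod n x i = x i :=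
  rfl

theorem reduceMod_surjective : Function.Surjective (reduceMod (ι := ι) n) := fun y => by
  classical
  obtain ⟨x, rfl⟩ := DFinsupp.mapRange_surjective (fun _ => ((↑) : ℤ → ZMod n))
    (fun _ => Int.cast_zero) |>.mpr (fun _ => ZMod.intCast_surjective) y
  exact ⟨DFinsupp.toFinsupp x, DFinsupp.ext fun _ => rfl⟩

theorem reduceMod_eq_zero_iff {x : ι →₀ ℤ} :
    reduceMod n x = 0 ↔ ∃ y : ι →₀ ℤ, n • y = x := by
  refine ⟨fun hx => ?_, ?_⟩
  · have hdvd (i : ι) : (n : ℤ) ∣ x i :=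
      (ZMod.intCast_zmod_eq_zero_iff_dvd _ _).mp (DFunLike.congr_fun hx i)
    exact ⟨x.mapRange (· / (n : ℤ)) (Int.zero_ediv _),
      Finsupp.ext fun i => by simp [Int.mul_ediv_cancel' (hdvd i)]⟩
  · rintro ⟨y, rfl⟩
    refine DFinsupp.ext fun i => ?_
    rw [reduceMod_apply, Finsupp.smul_apply, nsmul_eq_mul, Int.cast_mul, Int.cast_natCast,
      ZMod.natCast_self, zero_mul, DFinsupp.zero_apply]

end Finsupp

section DedekindDomain

variable {R : Type*} [CommRing R] [IsDedekindDomain R] {K : Type*} [Field K] [Algebra R K]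
  [IsFractionRing R K]

theorem IsDedekindDomain.HeightOneSpectrum.toAdd_valuationOfNeZero
    (v : HeightOneSpectrum R) (a : Kˣ) :
    Multiplicative.toAdd (v.valuationOfNeZero a) = -count K v (spanSingleton R⁰ (a : K)) := by
  have hsec : spanSingleton R⁰ (a : K) =
      spanSingleton R⁰ (algebraMap R K (IsLocalization.sec R⁰ (a : K)).2)⁻¹ *
        (Ideal.span {(IsLocalization.sec R⁰ (a : K)).1} : Ideal R) := by
    rw [coeIdeal_span_singleton, spanSingleton_mul_spanSingleton, ← IsLocalization.sec_spec,
      mul_comm, mul_inv_cancel_right₀ (IsLocalization.to_map_ne_zero_of_mem_nonZeroDivisors K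
        le_rfl (IsLocalization.sec R⁰ (a : K)).2.2)]
  rw [count_well_defined K v (spanSingleton_ne_zero_iff.2 a.ne_zero) hsec]
  simp only [valuationOfNeZero, valuationOfNeZeroToFun, MonoidHom.coe_mk, OneHom.coe_mk,
    toAdd_ofAdd]
  ring

theorem ker_toPrincipalIdeal :
    (toPrincipalIdeal R K).ker = (Units.map (algebraMap R K).toMonoidHom).range := by
  ext a
  rw [MonoidHom.mem_ker, toPrincipalIdeal_eq_iff, Units.val_one, ← spanSingleton_one,
    spanSingleton_eq_spanSingleton, MonoidHom.mem_range]
  constructor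
  · rintro ⟨u, hu⟩
    refine ⟨u⁻¹, Units.ext ?_⟩
    rw [Units.smul_def, Algebra.smul_def] at hu
    simp [eq_inv_of_mul_eq_one_left hu]
  · rintro ⟨u, rfl⟩
    exact ⟨u⁻¹, by simp [Units.smul_def, Algebra.smul_def]⟩

theorem ClassGroup.mk_eq_one_iff_mem_range {I : (FractionalIdeal R⁰ K)ˣ} :
    ClassGroup.mk K I = 1 ↔ I ∈ (toPrincipalIdeal R K).range := by
  rw [ClassGroup.mk_eq_one_iff, mem_principal_ideals_iff, isPrincipal_iff]
  simp_rw [eq_comm]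

variable (R K) in
noncomputable def FractionalIdeal.divisor :
    (FractionalIdeal R⁰ K)ˣ →* Multiplicative (HeightOneSpectrum R →₀ ℤ) where
  toFun I := .ofAdd <| .ofSupportFinite (fun v => count K v I)
    (Filter.eventually_cofinite.mp (finite_factors (I : FractionalIdeal R⁰ K)))
  map_one' := Finsupp.ext fun v => count_one K v
  map_mul' I J := Finsupp.ext fun v => count_mul K v I.ne_zero J.ne_zero

namespace FractionalIdeal

@[simp]
theorem toAdd_divisor_apply (I : (FractionalIdeal R⁰ K)ˣ) (v : HeightOneSpectrum R) :
    Multiplicative.toAdd (divisor R K I) v = count K v I :=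
  rfl

theorem divisor_injective : Function.Injective (divisor R K) := fun I J h => by
  refine Units.ext ?_
  rw [← finprod_heightOneSpectrum_factorization' K I.ne_zero,
    ← finprod_heightOneSpectrum_factorization' K J.ne_zero]
  simp_rw [← toAdd_divisor_apply, h]

theorem divisor_surjective : Function.Surjective (divisor R K) := fun x => by
  have hx : x.prod (fun v n => (v.asIdeal : FractionalIdeal R⁰ K) ^ n) ≠ 0 :=
    Finset.prod_ne_zero_iff.mpr fun v _ => zpow_ne_zero _ (coeIdeal_ne_zero.mpr v.ne_bot)
  exact ⟨Units.mk0 _ hx, Finsupp.ext fun v => count_finsuppProd K v x⟩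

end FractionalIdeal

variable (R K) in
noncomputable def principalDivisor : Kˣ →* Multiplicative (HeightOneSpectrum R →₀ ℤ) :=
  (divisor R K).comp (toPrincipalIdeal R K)

@[simp]
theorem toAdd_principalDivisor_apply (a : Kˣ) (v : HeightOneSpectrum R) :
    Multiplicative.toAdd (principalDivisor R K a) v = count K v (spanSingleton R⁰ (a : K)) := by
  simp [principalDivisor]

theorem ker_principalDivisor :
    (principalDivisor R K).ker = (Units.map (algebraMap R K).toMonoidHom).range := by
  rw [principalDivisor, ← MonoidHom.comap_ker, (MonoidHom.ker_eq_bot_iff _).mpr divisor_injective,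
    MonoidHom.comap_bot, ker_toPrincipalIdeal]

theorem exists_principalDivisor_eq_pow_card (x : HeightOneSpectrum R →₀ ℤ) :
    ∃ a : Kˣ, principalDivisor R K a = .ofAdd x ^ Nat.card (ClassGroup R) := by
  obtain ⟨J, hJ⟩ := divisor_surjective (K := K) (Multiplicative.ofAdd x)
  obtain ⟨a, ha⟩ := ClassGroup.mk_eq_one_iff_mem_range.mp
    (show ClassGroup.mk K (J ^ Nat.card (ClassGroup R)) = 1 by rw [map_pow, pow_card_eq_one'])
  exact ⟨a, by rw [principalDivisor, MonoidHom.comp_apply, ha, map_pow, hJ]⟩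

theorem exists_eq_mul_pow_of_principalDivisor_eq_pow {n : ℕ}
    (hn : (Nat.card (ClassGroup R)).Coprime n) {a : Kˣ} {x : HeightOneSpectrum R →₀ ℤ}
    (hax : principalDivisor R K a = .ofAdd x ^ n) :
    ∃ (u : Rˣ) (b : Kˣ), a = Units.map (algebraMap R K).toMonoidHom u * b ^ n := by
  obtain ⟨J, hJ⟩ := divisor_surjective (K := K) (Multiplicative.ofAdd x)
  have hJn : J ^ n = toPrincipalIdeal R K a :=
    divisor_injective (by rw [map_pow, hJ, ← hax, principalDivisor, MonoidHom.comp_apply])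
  have hJ1 : ClassGroup.mk K J = 1 := hn.pow_left_bijective.injective <| by
    simp only [one_pow, ← map_pow, hJn, ClassGroup.mk_eq_one_iff_mem_range, MonoidHom.mem_range,
      exists_apply_eq_apply]
  obtain ⟨b, rfl⟩ := ClassGroup.mk_eq_one_iff_mem_range.mp hJ1
  have hab : a * (b ^ n)⁻¹ ∈ (toPrincipalIdeal R K).ker := by
    rw [MonoidHom.mem_ker, map_mul, map_inv, map_pow, hJn, mul_inv_cancel]
  rw [ker_toPrincipalIdeal] at hab
  obtain ⟨u, hu⟩ := hab
  exact ⟨u, b, by rw [hu, inv_mul_cancel_right]⟩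

variable (R K) in
noncomputable def unitsModPowMap (n : ℕ) : Rˣ ⧸ pPowers Rˣ n →* Kˣ ⧸ pPowers Kˣ n :=
  QuotientGroup.map _ _ (Units.map (algebraMap R K).toMonoidHom) <| by
    rintro _ ⟨u, rfl⟩
    exact ⟨_, (map_pow _ u n).symm⟩

variable (R K) in
noncomputable def divisorMod (n : ℕ) :
    Kˣ ⧸ pPowers Kˣ n →* Multiplicative (⨁ _ : HeightOneSpectrum R, ZMod n) :=
  QuotientGroup.lift _ ((Finsupp.reduceMod n).toMultiplicative.comp (principalDivisor R K)) <| by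
    rintro _ ⟨b, rfl⟩
    exact Finsupp.reduceMod_eq_zero_iff.mpr
      ⟨_, (congrArg Multiplicative.toAdd (map_pow _ b n)).symm⟩

variable {n : ℕ}

theorem divisorMod_mk (a : Kˣ) : divisorMod R K n a =
    .ofAdd (Finsupp.reduceMod n (Multiplicative.toAdd (principalDivisor R K a))) :=
  rfl

theorem toAdd_divisorMod_mk_apply (a : Kˣ) (v : HeightOneSpectrum R) :
    Multiplicative.toAdd (divisorMod R K n a) v =
      (count K v (spanSingleton R⁰ (a : K)) : ZMod n) := by
  simp [divisorMod_mk]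

theorem unitsModPowMap_injective (hn : 0 < n) : Function.Injective (unitsModPowMap R K n) := by
  have : Fact (0 < n) := ⟨hn⟩
  refine (injective_iff_map_eq_one _).mpr fun u hu => ?_
  induction u using QuotientGroup.induction_on with | H u => ?_
  rw [QuotientGroup.eq_one_iff, pPowers, ← selmerGroup.fromUnit_ker (K := K)]
  exact Subtype.ext hu

theorem range_unitsModPowMap_eq_ker (hn : (Nat.card (ClassGroup R)).Coprime n) :
    (unitsModPowMap R K n).range = (divisorMod R K n).ker := by
  refine le_antisymm ?_ fun q hq => ?_
  · rintro _ ⟨w, rfl⟩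
    induction w using QuotientGroup.induction_on with | H u => ?_
    have hu : principalDivisor R K (Units.map (algebraMap R K).toMonoidHom u) = 1 :=
      ker_principalDivisor.ge ⟨u, rfl⟩
    rw [MonoidHom.mem_ker, unitsModPowMap, QuotientGroup.map_mk, divisorMod_mk, hu, toAdd_one,
      map_zero, ofAdd_zero]
  · induction q using QuotientGroup.induction_on with | H a => ?_
    obtain ⟨x, hx⟩ := Finsupp.reduceMod_eq_zero_iff.mp hq
    obtain ⟨u, b, rfl⟩ := exists_eq_mul_pow_of_principalDivisor_eq_pow hn (x := x)
      (by rw [← ofAdd_nsmul, hx, ofAdd_toAdd])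
    refine ⟨u, ?_⟩
    simp [unitsModPowMap, (QuotientGroup.eq_one_iff _).mpr (pow_mem_pPowers b)]

theorem divisorMod_surjective (hn : (Nat.card (ClassGroup R)).Coprime n) :
    Function.Surjective (divisorMod R K n) := by
  intro y
  set h := ZMod.unitOfCoprime _ hn
  obtain ⟨x, hx⟩ := Finsupp.reduceMod_surjective (h⁻¹ • Multiplicative.toAdd y)
  obtain ⟨a, ha⟩ := exists_principalDivisor_eq_pow_card (K := K) x
  refine ⟨a, ?_⟩
  rw [divisorMod_mk, ha, toAdd_pow, toAdd_ofAdd, map_nsmul, hx, ← Nat.cast_smul_eq_nsmul (ZMod n),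
    ← ZMod.coe_unitOfCoprime _ hn, Units.smul_def, smul_smul, ← Units.val_mul, mul_inv_cancel,
    Units.val_one, one_smul, ofAdd_toAdd]

end DedekindDomain

theorem mulValHom_eq_valuationOfNeZero (k : Type*) [Field k] [NumberField k]
    (v : HeightOneSpectrum (𝓞 k)) : mulValHom k v = v.valuationOfNeZero :=
  MonoidHom.ext fun a => WithZero.coe_inj.mp <| by
    simp [mulValHom, WithZero.unitsWithZeroEquiv, WithZero.coe_unzero]

theorem addVal_eq_count (k : Type*) [Field k] [NumberField k] (v : HeightOneSpectrum (𝓞 k))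
    (a : kˣ) : addVal k v a = count k v (spanSingleton (𝓞 k)⁰ (a : k)) := by
  rw [addVal, mulValHom_eq_valuationOfNeZero, v.toAdd_valuationOfNeZero, neg_neg]

/-- if `p` does not divide the class number of `k`, then the sequence
`0 → O_k^×/(O_k^×)^p → k^×/(k^×)^p → ⊕_v ℤ/pℤ → 0` is exact. -/
theorem statement10 (k : Type) [Field k] [NumberField k] (p : ℕ) (hp : p.Prime)
    (hcl : ¬ p ∣ Nat.card (ClassGroup (𝓞 k))) :
    ∃ (ψ : ((𝓞 k)ˣ ⧸ pPowers (𝓞 k)ˣ p) →* (kˣ ⧸ pPowers kˣ p))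
      (φ : (kˣ ⧸ pPowers kˣ p) →*
        Multiplicative (⨁ _v : HeightOneSpectrum (𝓞 k), ZMod p)),
      (∀ u : (𝓞 k)ˣ, ψ (QuotientGroup.mk u)
          = QuotientGroup.mk (Units.map (algebraMap (𝓞 k) k).toMonoidHom u)) ∧
      (∀ (a : kˣ) (v : HeightOneSpectrum (𝓞 k)),
        Multiplicative.toAdd (φ (QuotientGroup.mk a)) v = ((addVal k v a : ℤ) : ZMod p)) ∧
      Function.Injective ψ ∧
      ψ.range = φ.ker ∧
      Function.Surjective φ := by
  have hcop : (Nat.card (ClassGroup (𝓞 k))).Coprime p := (hp.coprime_iff_not_dvd.mpr hcl).symm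
  refine ⟨unitsModPowMap (𝓞 k) k p, divisorMod (𝓞 k) k p, fun _ => rfl, fun a v => ?_,
    unitsModPowMap_injective hp.pos, range_unitsModPowMap_eq_ker hcop, divisorMod_surjective hcop⟩
  rw [toAdd_divisorMod_mk_apply, addVal_eq_count]
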